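/- Let W be an N×N real symmetric matrix with nonnegative entries, let g > 0 and H > 0, let a > 0, b, d̄ ∈ ℝ, and suppose g·H·ρ(W) < min{a − d̄, b − d̄}, where ρ(W) is the spectral radius of W. Then for every (real) eigenvalue λ of W, the modal closed-loop matrix [[d̄ + gHλ, −1], [ab, −a]] is Hurwitz (all its complex eigenvalues have strictly negative real part). -/

import Mathlib

/-!
For a real eigenvalue `λ` of `W`, `gHλ ≤ gH|λ| ≤ gHρ(W) < min (a - d̄) (b - d̄)`. Hence the modal
matrix has trace `d̄ + gHλ - a < 0` and determinant `a (b - d̄ - gHλ) > 0`, and a real `2 × 2`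
matrix with negative trace and positive determinant is Hurwitz: a complex root `z` of
`z² - t z + D` is either real, and then `z ≥ 0` would make the left side at least `D > 0`, or has
`2 Re z = t < 0`.
-/

def IsHurwitz {n : ℕ} (M : Matrix (Fin n) (Fin n) ℝ) : Prop :=
  ∀ z : ℂ, (Polynomial.aeval z) M.charpoly = 0 → z.re < 0

open scoped ENNReal in
theorem spectrum.norm_le_toReal_spectralRadius {𝕜 A : Type*} [NormedField 𝕜] [Ring A]
    [Algebra 𝕜 A] {a : A} (hfin : (spectrum 𝕜 a).Finite) {k : 𝕜} (hk : k ∈ spectrum 𝕜 a) :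
    ‖k‖ ≤ (spectralRadius 𝕜 a).toReal := by
  obtain ⟨M, hM⟩ := (hfin.image (‖·‖₊)).bddAbove
  have hbdd : spectralRadius 𝕜 a ≤ M :=
    iSup₂_le fun l hl => ENNReal.coe_le_coe.2 (hM ⟨l, hl, rfl⟩)
  have hle : (‖k‖₊ : ℝ≥0∞) ≤ spectralRadius 𝕜 a := le_iSup₂ (α := ℝ≥0∞) k hk
  simpa using ENNReal.toReal_mono (ne_top_of_le_ne_top ENNReal.coe_ne_top hbdd) hle

theorem Complex.re_neg_of_sq_sub_mul_add_eq_zero {t D : ℝ} (ht : t < 0) (hD : 0 < D) {z : ℂ}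
    (hz : z ^ 2 - t * z + D = 0) : z.re < 0 := by
  have hre : z.re ^ 2 - z.im ^ 2 - t * z.re + D = 0 := by
    simpa [sq] using congrArg Complex.re hz
  have him : z.im * (2 * z.re - t) = 0 := by
    have := congrArg Complex.im hz
    simp only [sq, Complex.sub_im, Complex.add_im, Complex.mul_im, Complex.ofReal_re,
      Complex.ofReal_im, Complex.zero_im] at this
    linarith
  rcases mul_eq_zero.mp him with hreal | hhalf
  · by_contra! hnonneg
    nlinarith
  · linarith

theorem Matrix.isHurwitz_of_trace_neg_of_det_pos {M : Matrix (Fin 2) (Fin 2) ℝ}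
    (htr : M.trace < 0) (hdet : 0 < M.det) : IsHurwitz M := by
  intro z hz
  rw [Matrix.charpoly_fin_two] at hz
  refine Complex.re_neg_of_sq_sub_mul_add_eq_zero htr hdet ?_
  simpa using hz

theorem perron_mode_margin_general {N : ℕ} (W : Matrix (Fin N) (Fin N) ℝ)
    (g H a b d : ℝ) (hg : 0 < g) (hH : 0 < H) (ha : 0 < a)
    (hmargin : g * H * (spectralRadius ℝ W).toReal < min (a - d) (b - d)) :
    ∀ lam ∈ spectrum ℝ W,
      IsHurwitz (!![d + g * H * lam, -1; a * b, -a] : Matrix (Fin 2) (Fin 2) ℝ) := by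
  intro lam hlam
  have hgH : 0 ≤ g * H := (mul_pos hg hH).le
  have hmode : g * H * lam < min (a - d) (b - d) :=
    calc g * H * lam ≤ g * H * |lam| := mul_le_mul_of_nonneg_left (le_abs_self lam) hgH
      _ ≤ g * H * (spectralRadius ℝ W).toReal := mul_le_mul_of_nonneg_left
          (spectrum.norm_le_toReal_spectralRadius W.finite_spectrum hlam) hgH
      _ < min (a - d) (b - d) := hmargin
  have hlt_a := hmode.trans_le (min_le_left _ _)
  have hlt_b := hmode.trans_le (min_le_right _ _)
  apply Matrix.isHurwitz_of_trace_neg_of_det_pos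
  · rw [Matrix.trace_fin_two_of]
    linarith
  · rw [Matrix.det_fin_two_of]
    nlinarith

/-- if `W` is symmetric with nonnegative entries and
`gHρ(W) < min {a − d̄, b − d̄}`, then every modal closed-loop matrix
`[[d̄ + gHλ, −1], [ab, −a]]`, for `λ` an eigenvalue of `W`, is Hurwitz. -/
theorem perron_mode_margin {N : ℕ} (W : Matrix (Fin N) (Fin N) ℝ)
    (hsymm : W.IsSymm) (hnonneg : ∀ i j, 0 ≤ W i j)
    (g H a b d : ℝ) (hg : 0 < g) (hH : 0 < H) (ha : 0 < a)
    (hmargin : g * H * (spectralRadius ℝ W).toReal < min (a - d) (b - d)) :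
    ∀ lam ∈ spectrum ℝ W,
      IsHurwitz (!![d + g * H * lam, -1; a * b, -a] : Matrix (Fin 2) (Fin 2) ℝ) :=
  perron_mode_margin_general W g H a b d hg hH ha hmargin
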